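/- arXiv:1409.0732 — 3 statements merged into one kernel-verified Lean document; each statement's English description precedes it below -/
import Mathlib

section
/- Let X ∈ L^p(ℝ^d) with p ∈ (0,∞), and let a^{(N)} ⊂ ℝ^d be a finite nonempty set with e_p(a^{(N)},X)^p = E[d(X,a^{(N)})^p] > 0 where the law of X is not supported in a^{(N)}. Then the function ξ ↦ E[(d(X,a^{(N)}) ∧ |X-ξ|)^p] attains its infimum over ℝ^d at some point a_{N+1} ∈ ℝ^d. -/
/-!
Write `F ξ = E[(d(X, Γ) ∧ |X - ξ|)^p]`. By dominated convergence, with the integrable bound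
`d(X, Γ)^p`, the function `F` is continuous and tends to `E[d(X, Γ)^p]` as `|ξ| → ∞`, while
`F ≤ E[d(X, Γ)^p]` everywhere. So either `F` is constant, or some value of `F` lies strictly
below its limit at infinity and the extreme value theorem on a large compact ball gives a
minimizer.
-/

open MeasureTheory Metric Bornology Filter Topology

theorem Continuous.exists_forall_le_of_le_of_tendsto_cocompact {β α : Type*}
    [TopologicalSpace β] [Nonempty β] [LinearOrder α] [TopologicalSpace α] [OrderTopology α]
    {f : β → α} {c : α} (hf : Continuous f) (hle : ∀ x, f x ≤ c)
    (hlim : Tendsto f (cocompact β) (𝓝 c)) : ∃ a, ∀ x, f a ≤ f x := by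
  by_cases h : ∃ x₀, f x₀ < c
  · obtain ⟨x₀, hx₀⟩ := h
    exact hf.exists_forall_le' x₀ ((hlim.eventually (lt_mem_nhds hx₀)).mono fun _ => le_of_lt)
  · push Not at h
    exact ⟨Classical.arbitrary β, fun x => (hle _).trans (h x)⟩

section QuantizationErrorInsert

variable {Ω E : Type*} [MeasurableSpace Ω] {P : Measure Ω} [NormedAddCommGroup E]
  {X : Ω → E} {p : ℝ} {s : Set E}

/-- For nonempty `s`, the `p`-th power of the `L^p`-quantization error of the grid `s ∪ {ξ}`. -/
noncomputable def quantErrorInsert (P : Measure Ω) (X : Ω → E) (p : ℝ) (s : Set E) (ξ : E) :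
    ℝ :=
  ∫ ω, (min (infDist (X ω) s) ‖X ω - ξ‖) ^ p ∂P

lemma integrable_infDist_rpow [IsFiniteMeasure P] (hX : AEStronglyMeasurable X P) (hp : 0 < p)
    (hLp : Integrable (fun ω => ‖X ω‖ ^ p) P) (s : Set E) :
    Integrable (fun ω => infDist (X ω) s ^ p) P := by
  have hp₀ : ENNReal.ofReal p ≠ 0 := by simpa using hp
  have hXp : MemLp X (ENNReal.ofReal p) P :=
    (integrable_norm_rpow_iff hX hp₀ ENNReal.ofReal_ne_top).1
      (by rwa [ENNReal.toReal_ofReal hp.le])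
  have hdp : MemLp (fun ω => infDist (X ω) s) (ENNReal.ofReal p) P := by
    refine (hXp.norm.add (memLp_const (infDist 0 s))).mono
      ((continuous_infDist_pt s).comp_aestronglyMeasurable hX) (ae_of_all _ fun ω => ?_)
    have h := infDist_le_infDist_add_dist (x := X ω) (y := 0) (s := s)
    rw [dist_zero_right] at h
    simp only [Pi.add_apply, Real.norm_eq_abs, abs_of_nonneg infDist_nonneg]
    exact h.trans ((add_comm _ _).trans_le (le_abs_self _))
  simpa [ENNReal.toReal_ofReal hp.le, abs_of_nonneg infDist_nonneg] using
    (integrable_norm_rpow_iff hdp.1 hp₀ ENNReal.ofReal_ne_top).2 hdp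

lemma aestronglyMeasurable_min_infDist_norm_sub_rpow (hX : AEStronglyMeasurable X P)
    (hp : 0 ≤ p) (ξ : E) :
    AEStronglyMeasurable (fun ω => (min (infDist (X ω) s) ‖X ω - ξ‖) ^ p) P :=
  ((Real.continuous_rpow_const hp).comp
    ((continuous_infDist_pt s).min
      (continuous_id.sub continuous_const).norm)).comp_aestronglyMeasurable hX

lemma norm_min_infDist_norm_sub_rpow_le (hp : 0 ≤ p) (x ξ : E) :
    ‖(min (infDist x s) ‖x - ξ‖) ^ p‖ ≤ infDist x s ^ p := by
  have hmin : 0 ≤ min (infDist x s) ‖x - ξ‖ := le_min infDist_nonneg (norm_nonneg _)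
  rw [Real.norm_eq_abs, abs_of_nonneg (Real.rpow_nonneg hmin p)]
  exact Real.rpow_le_rpow hmin (min_le_left _ _) hp

lemma quantErrorInsert_le (hp : 0 ≤ p)
    (hint : Integrable (fun ω => infDist (X ω) s ^ p) P) (ξ : E) :
    quantErrorInsert P X p s ξ ≤ ∫ ω, infDist (X ω) s ^ p ∂P :=
  integral_mono_of_nonneg
    (ae_of_all _ fun _ => Real.rpow_nonneg (le_min infDist_nonneg (norm_nonneg _)) _) hint
    (ae_of_all _ fun ω => (le_abs_self _).trans (norm_min_infDist_norm_sub_rpow_le hp (X ω) ξ))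

lemma continuous_quantErrorInsert (hX : AEStronglyMeasurable X P) (hp : 0 ≤ p)
    (hint : Integrable (fun ω => infDist (X ω) s ^ p) P) :
    Continuous (quantErrorInsert P X p s) :=
  continuous_of_dominated (aestronglyMeasurable_min_infDist_norm_sub_rpow hX hp)
    (fun ξ => ae_of_all _ fun ω => norm_min_infDist_norm_sub_rpow_le hp (X ω) ξ) hint
    (ae_of_all _ fun _ => (Real.continuous_rpow_const hp).comp
      (continuous_const.min (continuous_const.sub continuous_id).norm))

lemma tendsto_quantErrorInsert_cobounded (hX : AEStronglyMeasurable X P) (hp : 0 ≤ p)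
    (hint : Integrable (fun ω => infDist (X ω) s ^ p) P) :
    Tendsto (quantErrorInsert P X p s) (cobounded E) (𝓝 (∫ ω, infDist (X ω) s ^ p ∂P)) := by
  have : (cobounded E).IsCountablyGenerated := by rw [← comap_norm_atTop]; infer_instance
  refine tendsto_integral_filter_of_dominated_convergence _
    (Eventually.of_forall (aestronglyMeasurable_min_infDist_norm_sub_rpow hX hp))
    (Eventually.of_forall fun ξ =>
      ae_of_all _ fun ω => norm_min_infDist_norm_sub_rpow_le hp (X ω) ξ)
    hint (ae_of_all _ fun ω => tendsto_const_nhds.congr' ?_)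
  -- far from `X ω`, the new point `ξ` is never the closest one
  filter_upwards
    [(tendsto_dist_left_cobounded_atTop (X ω)).eventually_ge_atTop (infDist (X ω) s)] with ξ hξ
  rw [← dist_eq_norm, min_eq_left hξ]

end QuantizationErrorInsert

theorem stmt_2_general {E : Type*} [NormedAddCommGroup E] [NormedSpace ℝ E] [FiniteDimensional ℝ E]
    [MeasurableSpace E] [BorelSpace E]
    {Ω : Type*} [MeasurableSpace Ω] (P : Measure Ω) [IsProbabilityMeasure P]
    (X : Ω → E) (hX : Measurable X) (p : ℝ) (hp : 0 < p)
    (hLp : Integrable (fun ω => ‖X ω‖ ^ p) P)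
    (Γ : Finset E) :
    ∃ a : E, ∀ ξ : E,
      ∫ ω, (min (infDist (X ω) ↑Γ) ‖X ω - a‖) ^ p ∂P
        ≤ ∫ ω, (min (infDist (X ω) ↑Γ) ‖X ω - ξ‖) ^ p ∂P := by
  have hXm := hX.aestronglyMeasurable (μ := P)
  have hint := integrable_infDist_rpow hXm hp hLp (Γ : Set E)
  have hlim := tendsto_quantErrorInsert_cobounded hXm hp.le hint
  rw [cobounded_eq_cocompact] at hlim
  exact (continuous_quantErrorInsert hXm hp.le hint).exists_forall_le_of_le_of_tendsto_cocompact
    (quantErrorInsert_le hp.le hint) hlim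

theorem stmt_2 {E : Type*} [NormedAddCommGroup E] [NormedSpace ℝ E] [FiniteDimensional ℝ E]
    [MeasurableSpace E] [BorelSpace E]
    {Ω : Type*} [MeasurableSpace Ω] (P : Measure Ω) [IsProbabilityMeasure P]
    (X : Ω → E) (hX : Measurable X) (p : ℝ) (hp : 0 < p)
    (hLp : Integrable (fun ω => ‖X ω‖ ^ p) P)
    (Γ : Finset E) (hΓ : Γ.Nonempty)
    (hpos : 0 < ∫ ω, infDist (X ω) (↑Γ : Set E) ^ p ∂P)
    (hsupp : 0 < Measure.map X P ((↑Γ : Set E)ᶜ)) :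
    ∃ a : E, ∀ ξ : E,
      ∫ ω, (min (infDist (X ω) ↑Γ) ‖X ω - a‖) ^ p ∂P
        ≤ ∫ ω, (min (infDist (X ω) ↑Γ) ‖X ω - ξ‖) ^ p ∂P :=
  stmt_2_general P X hX p hp hLp Γ
end

section
/- Let X ∈ L^p(ℝ^d), p ∈ (0,∞), and let (a_N)_{N≥1} be an L^p-optimal greedy quantization sequence for X. Then e_p(a^{(N)}, X) → 0 as N → ∞; equivalently, ∫ min_{1≤i≤N} |ξ - a_i|^p μ(dξ) → 0. -/
open MeasureTheory Metric Filter

/-- The grid `{a 1, ..., a N}` formed by the first `N` terms of the sequence `a`. -/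
def grid {E : Type*} (a : ℕ → E) (N : ℕ) : Set E := a '' Set.Icc 1 N

/-- `a` is an `L^p`-optimal greedy quantization sequence for `X`. -/
def IsGreedy {E : Type*} [NormedAddCommGroup E] [MeasurableSpace E]
    {Ω : Type*} [MeasurableSpace Ω] (P : Measure Ω) (X : Ω → E) (p : ℝ) (a : ℕ → E) : Prop :=
  ∀ N : ℕ, ∀ ξ : E,
    ∫ ω, infDist (X ω) (insert (a (N + 1)) (grid a N)) ^ p ∂P
      ≤ ∫ ω, infDist (X ω) (insert ξ (grid a N)) ^ p ∂P

/-! The distances `D_N = d(X, a^{(N)})` decrease to a limit `d_∞`, so by dominated convergence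
(with dominating function `|X - a_1|^p`) the errors `∫ D_N^p` decrease to `∫ d_∞^p`. Greedy
optimality gives `∫ D_{N+1}^p ≤ ∫ (|X - ξ| ∧ D_N)^p` for every `ξ`; in the limit
`∫ d_∞^p ≤ ∫ (|X - ξ| ∧ d_∞)^p`, which forces `d_∞ ≤ |X - ξ|` almost surely. Letting `ξ` run
through a countable dense set gives `d_∞ = 0` almost surely. -/

open Topology

lemma grid_succ {E : Type*} (a : ℕ → E) (N : ℕ) :
    grid a (N + 1) = insert (a (N + 1)) (grid a N) := by
  have hIcc : Set.Icc 1 (N + 1) = insert (N + 1) (Set.Icc 1 N) := by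
    ext n; simp only [Set.mem_Icc, Set.mem_insert_iff]; omega
  rw [grid, grid, hIcc, Set.image_insert_eq]

lemma grid_mono {E : Type*} (a : ℕ → E) : Monotone (grid a) :=
  fun _ _ h => Set.image_mono (Set.Icc_subset_Icc_right h)

lemma apply_one_mem_grid {E : Type*} (a : ℕ → E) {N : ℕ} (hN : 1 ≤ N) : a 1 ∈ grid a N :=
  Set.mem_image_of_mem a ⟨le_rfl, hN⟩

lemma infDist_insert_eq_min {α : Type*} [PseudoMetricSpace α] {s : Set α} (hs : s.Nonempty)
    (x y : α) : infDist x (insert y s) = min (dist x y) (infDist x s) := by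
  simp only [infDist, Set.insert_eq, infEDist_union, infEDist_singleton]
  rw [ENNReal.toReal_inf (edist_ne_top _ _) (infEDist_ne_top hs), dist_edist]

section RpowIntegrals

variable {Ω : Type*} [MeasurableSpace Ω] {P : Measure Ω} {p : ℝ}

lemma integrable_dist_rpow {E : Type*} [NormedAddCommGroup E] [IsFiniteMeasure P] {X : Ω → E}
    (hX : AEStronglyMeasurable X P) (hp : 0 < p) (hXp : Integrable (fun ω => ‖X ω‖ ^ p) P)
    (c : E) : Integrable (fun ω => dist (X ω) c ^ p) P := by
  have hp' : ENNReal.ofReal p ≠ 0 := ENNReal.ofReal_ne_zero_iff.2 hp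
  have hmem : MemLp X (ENNReal.ofReal p) P := by
    rwa [← integrable_norm_rpow_iff hX hp' ENNReal.ofReal_ne_top, ENNReal.toReal_ofReal hp.le]
  have hsub := hmem.sub (memLp_const c)
  rw [← integrable_norm_rpow_iff (hX.sub aestronglyMeasurable_const) hp' ENNReal.ofReal_ne_top,
    ENNReal.toReal_ofReal hp.le] at hsub
  simpa only [dist_eq_norm, Pi.sub_apply] using hsub

lemma norm_rpow_le_rpow_of_le {x y : ℝ} (hp : 0 ≤ p) (hx : 0 ≤ x) (hxy : x ≤ y) :
    ‖x ^ p‖ ≤ y ^ p := by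
  rw [Real.norm_of_nonneg (Real.rpow_nonneg hx p)]
  exact Real.rpow_le_rpow hx hxy hp

lemma integrable_rpow_of_le {f B : Ω → ℝ} (hp : 0 ≤ p) (hf : AEStronglyMeasurable f P)
    (hB : Integrable (fun ω => B ω ^ p) P) (hf0 : ∀ ω, 0 ≤ f ω) (hfB : ∀ ω, f ω ≤ B ω) :
    Integrable (fun ω => f ω ^ p) P :=
  hB.mono' ((Real.continuous_rpow_const hp).comp_aestronglyMeasurable hf)
    (Eventually.of_forall fun ω => norm_rpow_le_rpow_of_le hp (hf0 ω) (hfB ω))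

lemma tendsto_integral_rpow_of_le {f : ℕ → Ω → ℝ} {g B : Ω → ℝ} (hp : 0 ≤ p)
    (hf : ∀ n, AEStronglyMeasurable (f n) P) (hB : Integrable (fun ω => B ω ^ p) P)
    (hf0 : ∀ n ω, 0 ≤ f n ω) (hfB : ∀ n ω, f n ω ≤ B ω)
    (hfg : ∀ ω, Tendsto (fun n => f n ω) atTop (𝓝 (g ω))) :
    Tendsto (fun n => ∫ ω, f n ω ^ p ∂P) atTop (𝓝 (∫ ω, g ω ^ p ∂P)) :=
  tendsto_integral_of_dominated_convergence _
    (fun n => (integrable_rpow_of_le hp (hf n) hB (hf0 n) (hfB n)).aestronglyMeasurable) hB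
    (fun n => Eventually.of_forall fun ω => norm_rpow_le_rpow_of_le hp (hf0 n ω) (hfB n ω))
    (Eventually.of_forall fun ω =>
      (Real.continuousAt_rpow_const _ p (Or.inr hp)).tendsto.comp (hfg ω))

lemma ae_le_of_integral_rpow_le_integral_rpow_min {f g : Ω → ℝ} (hp : 0 < p)
    (hf0 : ∀ ω, 0 ≤ f ω) (hg0 : ∀ ω, 0 ≤ g ω) (hg : Integrable (fun ω => g ω ^ p) P)
    (hfg : Integrable (fun ω => min (f ω) (g ω) ^ p) P)
    (h : ∫ ω, g ω ^ p ∂P ≤ ∫ ω, min (f ω) (g ω) ^ p ∂P) :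
    ∀ᵐ ω ∂P, g ω ≤ f ω := by
  have hle : ∀ ω, min (f ω) (g ω) ^ p ≤ g ω ^ p := fun ω =>
    Real.rpow_le_rpow (le_min (hf0 ω) (hg0 ω)) (min_le_right _ _) hp.le
  have heq := (integral_eq_iff_of_ae_le hfg hg (Eventually.of_forall hle)).1
    (le_antisymm (integral_mono hfg hg hle) h)
  filter_upwards [heq] with ω hω
  by_contra! hlt
  rw [min_eq_left hlt.le] at hω
  exact (Real.rpow_lt_rpow (hf0 ω) hlt hp).ne hω

lemma ae_nonpos_of_forall_ae_le_dist {α : Type*} [PseudoMetricSpace α]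
    [TopologicalSpace.SeparableSpace α] {X : Ω → α} {d : Ω → ℝ}
    (h : ∀ ξ, ∀ᵐ ω ∂P, d ω ≤ dist (X ω) ξ) : ∀ᵐ ω ∂P, d ω ≤ 0 := by
  obtain ⟨s, hs, hdense⟩ := TopologicalSpace.exists_countable_dense α
  filter_upwards [(ae_ball_iff hs).2 fun ξ _ => h ξ] with ω hω
  refine le_of_forall_pos_le_add fun ε hε => ?_
  obtain ⟨ξ, hξs, hξ⟩ := hdense.exists_dist_lt (X ω) hε
  linarith [hω ξ hξs]

end RpowIntegrals

lemma tendsto_integral_rpow_zero_of_le_min {Ω α : Type*} [MeasurableSpace Ω] {P : Measure Ω}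
    [PseudoMetricSpace α] [TopologicalSpace.SeparableSpace α] [MeasurableSpace α]
    [OpensMeasurableSpace α] {X : Ω → α} (hX : Measurable X) {p : ℝ} (hp : 0 < p)
    {D : ℕ → Ω → ℝ} {B : Ω → ℝ} (hD : ∀ n, Measurable (D n)) (hD0 : ∀ n ω, 0 ≤ D n ω)
    (hD_anti : ∀ ω, Antitone (D · ω)) (hDB : ∀ n ω, D n ω ≤ B ω)
    (hB : Integrable (fun ω => B ω ^ p) P)
    (hD_min : ∀ n ξ, ∫ ω, D (n + 1) ω ^ p ∂P ≤ ∫ ω, min (dist (X ω) ξ) (D n ω) ^ p ∂P) :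
    Tendsto (fun n => ∫ ω, D n ω ^ p ∂P) atTop (𝓝 0) := by
  set d : Ω → ℝ := fun ω => ⨅ n, D n ω
  have hbdd : ∀ ω, BddBelow (Set.range (D · ω)) := fun ω =>
    ⟨0, Set.forall_mem_range.2 fun n => hD0 n ω⟩
  have hD_lim : ∀ ω, Tendsto (D · ω) atTop (𝓝 (d ω)) := fun ω =>
    tendsto_atTop_ciInf (hD_anti ω) (hbdd ω)
  have hdD : ∀ n ω, d ω ≤ D n ω := fun n ω => ciInf_le (hbdd ω) n
  have hd0 : ∀ ω, 0 ≤ d ω := fun ω => Real.iInf_nonneg fun n => hD0 n ω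
  have hd_int : Integrable (fun ω => d ω ^ p) P := integrable_rpow_of_le hp.le
    (Measurable.iInf hD).aestronglyMeasurable hB hd0 fun ω => (hdD 0 ω).trans (hDB 0 ω)
  have hD_int : ∀ n, Integrable (fun ω => D n ω ^ p) P := fun n =>
    integrable_rpow_of_le hp.le (hD n).aestronglyMeasurable hB (hD0 n) (hDB n)
  have hd_le_dist : ∀ ξ, ∀ᵐ ω ∂P, d ω ≤ dist (X ω) ξ := by
    intro ξ
    have hdist : Measurable fun ω => dist (X ω) ξ := hX.dist measurable_const
    have hmin_lim := tendsto_integral_rpow_of_le hp.le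
      (fun n => (hdist.min (hD n)).aestronglyMeasurable) hB
      (fun n ω => le_min dist_nonneg (hD0 n ω)) (fun n ω => (min_le_right _ _).trans (hDB n ω))
      (fun ω => tendsto_const_nhds.min (hD_lim ω))
    refine ae_le_of_integral_rpow_le_integral_rpow_min hp (fun _ => dist_nonneg) hd0 hd_int
      (integrable_rpow_of_le hp.le (hdist.min (Measurable.iInf hD)).aestronglyMeasurable hB
        (fun ω => le_min dist_nonneg (hd0 ω))
        (fun ω => (min_le_right _ _).trans ((hdD 0 ω).trans (hDB 0 ω))))
      (ge_of_tendsto hmin_lim (Eventually.of_forall fun n => ?_))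
    calc ∫ ω, d ω ^ p ∂P ≤ ∫ ω, D (n + 1) ω ^ p ∂P :=
          integral_mono hd_int (hD_int _) fun ω => Real.rpow_le_rpow (hd0 ω) (hdD _ ω) hp.le
      _ ≤ _ := hD_min n ξ
  have hd_zero : ∀ᵐ ω ∂P, d ω ^ p = 0 := by
    filter_upwards [ae_nonpos_of_forall_ae_le_dist hd_le_dist] with ω hω
    rw [le_antisymm hω (hd0 ω), Real.zero_rpow hp.ne']
  simpa only [integral_congr_ae hd_zero, Pi.zero_apply, integral_zero] using
    tendsto_integral_rpow_of_le hp.le (fun n => (hD n).aestronglyMeasurable) hB hD0 hDB hD_lim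

theorem stmt_4 {E : Type*} [NormedAddCommGroup E] [NormedSpace ℝ E] [FiniteDimensional ℝ E]
    [MeasurableSpace E] [BorelSpace E]
    {Ω : Type*} [MeasurableSpace Ω] (P : Measure Ω) [IsProbabilityMeasure P]
    (X : Ω → E) (hX : Measurable X) (p : ℝ) (hp : 0 < p)
    (hLp : Integrable (fun ω => ‖X ω‖ ^ p) P)
    (a : ℕ → E) (ha : IsGreedy P X p a) :
    Tendsto (fun N => ∫ ω, infDist (X ω) (grid a N) ^ p ∂P) atTop (nhds 0) := by
  have ha1 : ∀ n, a 1 ∈ grid a (n + 1) := fun n => apply_one_mem_grid a (by omega)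
  -- `grid a 0 = ∅`, on which `infDist` is the junk value `0`; the argument starts at `N = 1`.
  rw [← tendsto_add_atTop_iff_nat 1]
  refine tendsto_integral_rpow_zero_of_le_min hX hp
    (fun n => (continuous_infDist_pt _).measurable.comp hX) (fun _ _ => infDist_nonneg)
    (fun ω m n hmn => infDist_le_infDist_of_subset (grid_mono a (by omega)) ⟨_, ha1 m⟩)
    (fun n ω => infDist_le_dist_of_mem (ha1 n))
    (integrable_dist_rpow hX.aestronglyMeasurable hp hLp (a 1)) fun n ξ => ?_
  have h := ha (n + 1) ξ
  rw [← grid_succ] at h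
  simpa only [infDist_insert_eq_min ⟨_, ha1 n⟩] using h
end

section
/- Let X ∈ L^2(ℝ^d) with non-degenerate law, a^{(N-1)} a finite set, and let (a_{[n]}) be the greedy Lloyd iteration started at a_{[0]} in the support of the law with E[d(X, a^{(N-1)} ∪ {a_{[0]}})²] < E[d(X, a^{(N-1)})²]. Then the sequence (a_{[n]}) is bounded. -/
/-!
Write `D b = E[d(X, s ∪ {b})²]`. A greedy Lloyd step does not increase `D`: on the Voronoi cell of
`b` the barycenter of the cell minimises the mean squared distance, and off the cell `d(·, s)`
bounds `d(·, s ∪ {c})` for every `c`. Hence `D (a n) ≤ D (a 0) < E[d(X, s)²]` for all `n`. By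
monotone convergence some ball `B(g, k)` around a point `g ∈ s` carries more than `D (a 0)` of
`E[d(X, s)²]`, and a centre farther than `2k` from `g` is nearest to no point of that ball, so its
`D` exceeds `D (a 0)`.
-/

open MeasureTheory Metric

/-- The support of a measure: points all of whose neighbourhoods have positive mass. -/
def measSupport {E : Type*} [MeasurableSpace E] [PseudoMetricSpace E] (μ : Measure E) : Set E :=
  {x | ∀ r : ℝ, 0 < r → 0 < μ (Metric.ball x r)}

open Set Filter Topology Bornology
open scoped RealInnerProductSpace

theorem integral_norm_sub_average_sq_le {Ω E : Type*} [MeasurableSpace Ω] [NormedAddCommGroup E]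
    [InnerProductSpace ℝ E] [CompleteSpace E] {ν : Measure Ω} [IsFiniteMeasure ν] {f : Ω → E}
    (hf : MemLp f 2 ν) (b : E) :
    ∫ ω, ‖f ω - ⨍ ω', f ω' ∂ν‖ ^ 2 ∂ν ≤ ∫ ω, ‖f ω - b‖ ^ 2 ∂ν := by
  set c := ⨍ ω', f ω' ∂ν
  have hsq (e : E) : Integrable (fun ω => ‖f ω - e‖ ^ 2) ν :=
    (hf.sub (memLp_const e)).integrable_norm_pow two_ne_zero
  have hdev : Integrable (fun ω => f ω - c) ν := (hf.integrable one_le_two).sub (integrable_const c)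
  have hcross : Integrable (fun ω => 2 * ⟪c - b, f ω - c⟫) ν :=
    (hdev.const_inner (c - b)).const_mul 2
  have hcross_zero : ∫ ω, ⟪c - b, f ω - c⟫ ∂ν = 0 := by
    rw [integral_inner hdev, integral_sub_average, inner_zero_right]
  calc ∫ ω, ‖f ω - c‖ ^ 2 ∂ν = ∫ ω, (‖f ω - c‖ ^ 2 + 2 * ⟪c - b, f ω - c⟫) ∂ν := by
        rw [integral_add (hsq c) hcross, integral_const_mul, hcross_zero, mul_zero, add_zero]
    _ ≤ ∫ ω, ‖f ω - b‖ ^ 2 ∂ν := by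
        refine integral_mono ((hsq c).add hcross) (hsq b) fun ω => ?_
        have : f ω - b = (f ω - c) + (c - b) := by abel
        rw [this, norm_add_sq_real, real_inner_comm]
        nlinarith [sq_nonneg ‖c - b‖]

section Distortion

variable {α : Type*} [PseudoMetricSpace α] {s : Set α}

def voronoiCell (s : Set α) (b : α) : Set α :=
  {x | ∀ g ∈ s, dist x b ≤ dist x g}

theorem isClosed_voronoiCell (s : Set α) (b : α) : IsClosed (voronoiCell s b) := by
  simp only [voronoiCell, ofPred_forall]
  exact isClosed_biInter fun g _ =>
    isClosed_le (continuous_id.dist continuous_const) (continuous_id.dist continuous_const)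

theorem infDist_insert (hs : s.Nonempty) (b x : α) :
    infDist x (insert b s) = min (dist x b) (infDist x s) := by
  refine le_antisymm (le_min (infDist_le_dist_of_mem (mem_insert b s))
    (infDist_le_infDist_of_subset (subset_insert b s) hs)) ?_
  refine (le_infDist (insert_nonempty b s)).mpr fun y hy => ?_
  rcases hy with rfl | hy
  · exact min_le_left _ _
  · exact (min_le_right _ _).trans (infDist_le_dist_of_mem hy)

theorem infDist_insert_of_mem_voronoiCell (hs : s.Nonempty) {b x : α}
    (hx : x ∈ voronoiCell s b) : infDist x (insert b s) = dist x b := by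
  rw [infDist_insert hs, min_eq_left ((le_infDist hs).mpr hx)]

theorem infDist_insert_of_notMem_voronoiCell {b x : α} (hx : x ∉ voronoiCell s b) :
    infDist x (insert b s) = infDist x s := by
  simp only [voronoiCell, mem_ofPred_eq, not_forall, not_le] at hx
  obtain ⟨g, hg, hgb⟩ := hx
  rw [infDist_insert ⟨g, hg⟩, min_eq_right ((infDist_le_dist_of_mem hg).trans hgb.le)]

variable [MeasurableSpace α]

noncomputable def distortion (μ : Measure α) (s : Set α) : ℝ :=
  ∫ x, infDist x s ^ 2 ∂μ

variable [OpensMeasurableSpace α] {μ : Measure α}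

theorem integrable_infDist_insert_sq (hs : s.Nonempty)
    (hint : Integrable (fun x => infDist x s ^ 2) μ) (b : α) :
    Integrable (fun x => infDist x (insert b s) ^ 2) μ := by
  refine hint.mono ((continuous_infDist_pt _).pow 2).aestronglyMeasurable (.of_forall fun x => ?_)
  simp only [norm_pow, Real.norm_eq_abs, abs_of_nonneg infDist_nonneg]
  exact pow_le_pow_left₀ infDist_nonneg (infDist_le_infDist_of_subset (subset_insert b s) hs) 2

theorem isBounded_setOf_distortion_insert_le (hs : s.Nonempty)
    (hint : Integrable (fun x => infDist x s ^ 2) μ) {C : ℝ} (hC : C < distortion μ s) :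
    IsBounded {b | distortion μ (insert b s) ≤ C} := by
  obtain ⟨g, hg⟩ := hs
  have htend : Tendsto (fun k : ℕ => ∫ x in ball g k, infDist x s ^ 2 ∂μ) atTop
      (𝓝 (distortion μ s)) := by
    have := tendsto_setIntegral_of_monotone (s := fun k : ℕ => ball g k)
      (fun k => measurableSet_ball) (fun i j hij => ball_subset_ball (Nat.cast_le.mpr hij))
      (by rw [iUnion_ball_nat]; exact hint.integrableOn)
    rwa [iUnion_ball_nat, setIntegral_univ] at this
  obtain ⟨k, hk⟩ := (htend.eventually (eventually_gt_nhds hC)).exists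
  refine (isBounded_closedBall : IsBounded (closedBall g (2 * k))).subset fun b hb => ?_
  by_contra hfar
  rw [mem_closedBall, not_le] at hfar
  have hball : ∀ x ∈ ball g k, infDist x (insert b s) = infDist x s := fun x hx => by
    rw [infDist_insert ⟨g, hg⟩, min_eq_right]
    linarith [mem_ball.mp hx, infDist_le_dist_of_mem hg (x := x), dist_triangle b x g,
      dist_comm x b]
  refine hk.not_ge ?_
  calc ∫ x in ball g k, infDist x s ^ 2 ∂μ = ∫ x in ball g k, infDist x (insert b s) ^ 2 ∂μ :=
        setIntegral_congr_fun measurableSet_ball fun x hx => by rw [hball x hx]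
    _ ≤ distortion μ (insert b s) :=
        setIntegral_le_integral (integrable_infDist_insert_sq ⟨g, hg⟩ hint b)
          (.of_forall fun x => sq_nonneg _)
    _ ≤ C := hb

end Distortion

section Lloyd

variable {E : Type*} [NormedAddCommGroup E] [MeasurableSpace E] [OpensMeasurableSpace E]
  {μ : Measure E} [IsFiniteMeasure μ] {s : Set E}

theorem memLp_infDist {p : ENNReal} (hs : s.Nonempty) (hX : MemLp id p μ) :
    MemLp (fun x => infDist x s) p μ := by
  obtain ⟨g, hg⟩ := hs
  refine (hX.sub (memLp_const g)).of_le (continuous_infDist_pt s).aestronglyMeasurable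
    (.of_forall fun x => ?_)
  rw [Real.norm_eq_abs, abs_of_nonneg infDist_nonneg, Pi.sub_apply, ← dist_eq_norm]
  exact infDist_le_dist_of_mem hg

variable [InnerProductSpace ℝ E] [CompleteSpace E]

theorem distortion_insert_setAverage_voronoiCell_le (hs : s.Nonempty) (hX : MemLp id 2 μ) (b : E) :
    distortion μ (insert (⨍ x in voronoiCell s b, x ∂μ) s) ≤ distortion μ (insert b s) := by
  classical
  set W := voronoiCell s b
  set c := ⨍ x in W, x ∂μ
  have hW : MeasurableSet W := (isClosed_voronoiCell s b).measurableSet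
  have hsq (e : E) : Integrable (fun x => ‖x - e‖ ^ 2) μ :=
    (hX.sub (memLp_const e)).integrable_norm_pow two_ne_zero
  have hds : Integrable (fun x => infDist x s ^ 2) μ := (memLp_infDist hs hX).integrable_sq
  have hpiece (e : E) :
      ∫ x, W.piecewise (fun x => ‖x - e‖ ^ 2) (fun x => infDist x s ^ 2) x ∂μ =
        ∫ x in W, ‖x - e‖ ^ 2 ∂μ + ∫ x in Wᶜ, infDist x s ^ 2 ∂μ :=
    integral_piecewise hW (hsq e).integrableOn hds.integrableOn
  calc distortion μ (insert c s)
      ≤ ∫ x, W.piecewise (fun x => ‖x - c‖ ^ 2) (fun x => infDist x s ^ 2) x ∂μ := by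
        refine integral_mono (integrable_infDist_insert_sq hs hds c)
          (Integrable.piecewise hW (hsq c).integrableOn hds.integrableOn) fun x => ?_
        have hmin := le_min (dist_nonneg (x := x) (y := c)) (infDist_nonneg (x := x) (s := s))
        by_cases hx : x ∈ W <;> simp only [piecewise, hx, if_true, if_false, infDist_insert hs]
        · exact dist_eq_norm x c ▸ pow_le_pow_left₀ hmin (min_le_left _ _) 2
        · exact pow_le_pow_left₀ hmin (min_le_right _ _) 2
    _ ≤ ∫ x, W.piecewise (fun x => ‖x - b‖ ^ 2) (fun x => infDist x s ^ 2) x ∂μ := by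
        rw [hpiece, hpiece]
        exact add_le_add
          (integral_norm_sub_average_sq_le (f := fun x => x) (hX.restrict W) b) le_rfl
    _ = distortion μ (insert b s) := by
        refine integral_congr_ae (.of_forall fun x => ?_)
        by_cases hx : x ∈ W
        · simp [hx, infDist_insert_of_mem_voronoiCell hs hx, dist_eq_norm]
        · simp [hx, infDist_insert_of_notMem_voronoiCell hx]

end Lloyd

theorem stmt_17_general {d : ℕ}
    (μ : Measure (EuclideanSpace ℝ (Fin d))) [IsProbabilityMeasure μ]
    (hL2 : Integrable (fun x => ‖x‖ ^ 2) μ)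
    (Γ : Finset (EuclideanSpace ℝ (Fin d))) (hΓ : Γ.Nonempty)
    (a : ℕ → EuclideanSpace ℝ (Fin d))
    (W : ℕ → Set (EuclideanSpace ℝ (Fin d)))
    (hW : ∀ n, W n = {x | ∀ g ∈ Γ, ‖x - a n‖ ≤ ‖x - g‖})
    (hiter : ∀ n, a (n + 1) = (μ (W n)).toReal⁻¹ • ∫ x in W n, x ∂μ)
    (hdec : ∫ x, infDist x (insert (a 0) (↑Γ : Set (EuclideanSpace ℝ (Fin d)))) ^ 2 ∂μ
      < ∫ x, infDist x (↑Γ : Set (EuclideanSpace ℝ (Fin d))) ^ 2 ∂μ) :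
    ∃ R : ℝ, ∀ n, ‖a n‖ ≤ R := by
  have hX : MemLp id 2 μ := (memLp_two_iff_integrable_sq_norm aestronglyMeasurable_id).mpr hL2
  have hΓ' : (Γ : Set (EuclideanSpace ℝ (Fin d))).Nonempty := Finset.coe_nonempty.mpr hΓ
  have hstep (n : ℕ) : distortion μ (insert (a (n + 1)) Γ) ≤ distortion μ (insert (a n) Γ) := by
    have hcell : W n = voronoiCell Γ (a n) := by simp [hW, voronoiCell, dist_eq_norm]
    rw [hiter, ← measureReal_def, ← setAverage_eq, hcell]
    exact distortion_insert_setAverage_voronoiCell_le hΓ' hX (a n)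
  obtain ⟨R, hR⟩ := isBounded_iff_forall_norm_le.mp
    (isBounded_setOf_distortion_insert_le hΓ' (memLp_infDist hΓ' hX).integrable_sq hdec)
  have hanti : Antitone fun n => distortion μ (insert (a n) Γ) := antitone_nat_of_succ_le hstep
  exact ⟨R, fun n => hR (a n) (hanti n.zero_le)⟩

theorem stmt_17 {d : ℕ}
    (μ : Measure (EuclideanSpace ℝ (Fin d))) [IsProbabilityMeasure μ]
    (hL2 : Integrable (fun x => ‖x‖ ^ 2) μ)
    (hnd : ∀ x : EuclideanSpace ℝ (Fin d), μ ≠ Measure.dirac x)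
    (Γ : Finset (EuclideanSpace ℝ (Fin d))) (hΓ : Γ.Nonempty)
    (a : ℕ → EuclideanSpace ℝ (Fin d))
    (ha0 : a 0 ∈ measSupport μ)
    (W : ℕ → Set (EuclideanSpace ℝ (Fin d)))
    (hW : ∀ n, W n = {x | ∀ g ∈ Γ, ‖x - a n‖ ≤ ‖x - g‖})
    (hiter : ∀ n, a (n + 1) = (μ (W n)).toReal⁻¹ • ∫ x in W n, x ∂μ)
    (hdec : ∫ x, infDist x (insert (a 0) (↑Γ : Set (EuclideanSpace ℝ (Fin d)))) ^ 2 ∂μ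
      < ∫ x, infDist x (↑Γ : Set (EuclideanSpace ℝ (Fin d))) ^ 2 ∂μ) :
    ∃ R : ℝ, ∀ n, ‖a n‖ ≤ R :=
  stmt_17_general μ hL2 Γ hΓ a W hW hiter hdec
end
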